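/- Let ψ be a reflexive weakly left invariant fuzzy relation on a fuzzy automaton A. Define ψ^ε = ψ ∘ τ and ψ^{xu} = ψ ∘ δ_x ∘ ψ^u, and the crisp-deterministic fuzzy automaton A^ψ with states {ψ^u : u ∈ X*}, initial state ψ^ε, transitions ψ^u ↦ ψ^{xu} on letter x, and terminal membership σ ∘ ψ^u. Then A^ψ recognizes the reverse fuzzy language of A: for every word u, ⟦A^ψ⟧(u) = ⟦A⟧(ū), where ū is the reversal of u. -/
import Mathlib


namespace FuzzyAut

/-- Composition of fuzzy relations. -/
def rcomp {L : Type*} [CompleteLattice L] [CommMonoid L] {A B C : Type*}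
    (α : A → B → L) (β : B → C → L) : A → C → L :=
  fun a c => ⨆ b, α a b * β b c

/-- Composition of a fuzzy set with a fuzzy relation. -/
def scomp {L : Type*} [CompleteLattice L] [CommMonoid L] {A B : Type*}
    (f : A → L) (α : A → B → L) : B → L :=
  fun b => ⨆ a, f a * α a b

/-- Composition of a fuzzy relation with a fuzzy set. -/
def rscomp {L : Type*} [CompleteLattice L] [CommMonoid L] {A B : Type*}
    (α : A → B → L) (g : B → L) : A → L :=
  fun a => ⨆ b, α a b * g b

/-- Scalar composition of two fuzzy sets. -/
def sscomp {L : Type*} [CompleteLattice L] [CommMonoid L] {A : Type*}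
    (f g : A → L) : L := ⨆ a, f a * g a

/-- The crisp equality fuzzy relation. -/
def eqRel {L : Type*} [CompleteLattice L] [CommMonoid L] (A : Type*) : A → A → L :=
  fun a b => ⨆ _ : a = b, (1 : L)

/-- The fuzzy transition relation extended to words. -/
def relWord {L : Type*} [CompleteLattice L] [CommMonoid L] {A X : Type*}
    (δ : X → A → A → L) : List X → A → A → L
  | [] => eqRel A
  | x :: u => rcomp (δ x) (relWord δ u)

/-- The family φ_u : φ_ε = σ∘φ, φ_{ux} = φ_u∘δ_x∘φ. -/
def phiFam {L : Type*} [CompleteLattice L] [CommMonoid L] {A X : Type*}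
    (σ : A → L) (δ : X → A → A → L) (φ : A → A → L) (u : List X) : A → L :=
  u.foldl (fun f x => scomp (scomp f (δ x)) φ) (scomp σ φ)

/-- The family ψ^u : ψ^ε = ψ∘τ, ψ^{xu} = ψ∘δ_x∘ψ^u. -/
def psiFam {L : Type*} [CompleteLattice L] [CommMonoid L] {A X : Type*}
    (τ : A → L) (δ : X → A → A → L) (ψ : A → A → L) : List X → A → L
  | [] => rscomp ψ τ
  | x :: u => rscomp ψ (rscomp (δ x) (psiFam τ δ ψ u))

/-- Reflexivity of a fuzzy relation. -/
def IsRefl {L : Type*} [CompleteLattice L] [CommMonoid L] {A : Type*}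
    (φ : A → A → L) : Prop := ∀ a, φ a a = 1

/-- Transitivity of a fuzzy relation. -/
def IsTrans {L : Type*} [CompleteLattice L] [CommMonoid L] {A : Type*}
    (φ : A → A → L) : Prop := ∀ a b c, φ a b * φ b c ≤ φ a c

section Aux

variable {L : Type*} [CompleteLattice L] [CommMonoid L] (res : L → L → L)
  (hres : ∀ x y z : L, x * y ≤ z ↔ x ≤ res y z)

include hres

theorem mul_iSup_eq {ι : Sort*} (x : L) (f : ι → L) :
    x * ⨆ i, f i = ⨆ i, x * f i := by
  apply eq_of_forall_ge_iff
  intro z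
  rw [mul_comm, hres, iSup_le_iff, iSup_le_iff]
  constructor
  · intro h i; rw [mul_comm, hres]; exact h i
  · intro h i; have := h i; rw [mul_comm, hres] at this; exact this

theorem iSup_mul_eq {ι : Sort*} (x : L) (f : ι → L) :
    (⨆ i, f i) * x = ⨆ i, f i * x := by
  rw [mul_comm, mul_iSup_eq res hres]
  exact iSup_congr fun i => mul_comm _ _

theorem mul_le_mul_r {a b : L} (c : L) (h : a ≤ b) : a * c ≤ b * c := by
  rw [hres]
  exact h.trans ((hres b c (b * c)).mp le_rfl)

theorem scomp_eqRel {A : Type*} (f : A → L) : scomp f (eqRel A) = f := by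
  funext b
  simp only [scomp, eqRel, mul_iSup_eq res hres, mul_one]
  simp

theorem rcomp_eqRel {A B : Type*} (α : A → B → L) : rcomp α (eqRel B) = α := by
  funext a c
  simp only [rcomp, eqRel, mul_iSup_eq res hres, mul_one]
  simp

theorem eqRel_rcomp {A B : Type*} (α : A → B → L) : rcomp (eqRel A) α = α := by
  funext a c
  simp only [rcomp, eqRel, iSup_mul_eq res hres, one_mul]
  simp

theorem rcomp_assoc {A B C D : Type*} (α : A → B → L) (β : B → C → L) (γ : C → D → L) :
    rcomp (rcomp α β) γ = rcomp α (rcomp β γ) := by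
  funext a d
  simp only [rcomp, iSup_mul_eq res hres, mul_iSup_eq res hres, mul_assoc]
  exact iSup_comm

theorem scomp_rcomp {A B C : Type*} (f : A → L) (α : A → B → L) (β : B → C → L) :
    scomp (scomp f α) β = scomp f (rcomp α β) := by
  funext c
  simp only [scomp, rcomp, iSup_mul_eq res hres, mul_iSup_eq res hres, mul_assoc]
  exact iSup_comm

theorem sscomp_rscomp {A B : Type*} (f : A → L) (α : A → B → L) (g : B → L) :
    sscomp f (rscomp α g) = sscomp (scomp f α) g := by
  simp only [sscomp, rscomp, scomp, iSup_mul_eq res hres, mul_iSup_eq res hres, mul_assoc]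
  exact iSup_comm

theorem relWord_append_singleton {A X : Type*} (δ : X → A → A → L) (u : List X) (x : X) :
    relWord δ (u ++ [x]) = rcomp (relWord δ u) (δ x) := by
  induction u with
  | nil => simp only [List.nil_append, relWord, rcomp_eqRel res hres, eqRel_rcomp res hres]
  | cons y u ih =>
      simp only [List.cons_append, relWord]
      rw [rcomp_assoc res hres]
      exact congrArg (fun r => rcomp (δ y) r) ih

end Aux

/-- for a reflexive weakly left invariant fuzzy relation ψ, the
cdfa A^ψ (state after reading u is ψ^{reverse u}, terminal membership σ∘ψ^u)
recognizes the reverse language of A: ⟦A^ψ⟧(u) = ⟦A⟧(ū). -/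
theorem stmt14 {L : Type*} [CompleteLattice L] [CommMonoid L] (res : L → L → L) (hres : ∀ x y z : L, x * y ≤ z ↔ x ≤ res y z) (htop : ∀ x : L, x ≤ 1)
    {A X : Type*} (σ : A → L) (δ : X → A → A → L) (τ : A → L)
    (ψ : A → A → L) (hrefl : IsRefl ψ)
    (hwli : ∀ u : List X, scomp (scomp σ (relWord δ u)) ψ ≤ scomp σ (relWord δ u)) :
    ∀ u : List X,
      sscomp σ (psiFam τ δ ψ u.reverse) = sscomp (scomp σ (relWord δ u.reverse)) τ := by
  -- σ after reading word u
  set σW : List X → A → L := fun u => scomp σ (relWord δ u) with hσW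
  -- key invariance: σW u ∘ ψ = σW u
  have hinv : ∀ u : List X, scomp (σW u) ψ = σW u := by
    intro u
    apply le_antisymm
    · exact hwli u
    · intro b
      have : σW u b * ψ b b ≤ ⨆ a, σW u a * ψ a b := le_iSup (fun a => σW u a * ψ a b) b
      rw [hrefl b, mul_one] at this
      exact this
  have happ : ∀ (u : List X) (x : X), scomp (σW u) (δ x) = σW (u ++ [x]) := by
    intro u x
    rw [hσW]
    simp only [relWord_append_singleton res hres, ← scomp_rcomp res hres]
  have main : ∀ v u : List X, sscomp (σW u) (psiFam τ δ ψ v) = sscomp (σW (u ++ v)) τ := by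
    intro v
    induction v with
    | nil =>
        intro u
        simp only [psiFam, sscomp_rscomp res hres, hinv, List.append_nil]
    | cons x v ih =>
        intro u
        calc sscomp (σW u) (psiFam τ δ ψ (x :: v))
            = sscomp (scomp (σW u) ψ) (rscomp (δ x) (psiFam τ δ ψ v)) := by
              rw [psiFam, sscomp_rscomp res hres]
          _ = sscomp (σW u) (rscomp (δ x) (psiFam τ δ ψ v)) := by rw [hinv]
          _ = sscomp (scomp (σW u) (δ x)) (psiFam τ δ ψ v) := by
              rw [sscomp_rscomp res hres]
          _ = sscomp (σW (u ++ [x] ++ v)) τ := by rw [happ, ih]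
          _ = sscomp (σW (u ++ x :: v)) τ := by simp
  intro u
  have h0 : σW [] = σ := by
    rw [hσW]; simp only [relWord, scomp_eqRel res hres]
  have := main u.reverse []
  rw [h0, List.nil_append] at this
  exact this

end FuzzyAut
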